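/- Let T be a tiling of an n-gon and σ = Scott(T). Then σ(i) = i + 2 (mod n) if and only if there exists a tiling T' flip-equivalent to T having a triangular ear at vertex i+1 (i.e. containing the triangle {i, i+1, i+2} with diagonal [i, i+2]). -/

import Mathlib

open scoped Classical

/-!  Combinatorial model of tilings of a convex `n`-gon.
The vertices of the polygon are `ZMod n`, listed clockwise as `0,1,...,n-1`.
A tile is recorded as the finset of its vertices. -/

/-- The next vertex of `Q` strictly clockwise after `a`. -/
noncomputable def cnext (n : ℕ) (Q : Finset (ZMod n)) (a : ZMod n) : ZMod n :=
  if h : ∃ k : ℕ, 0 < k ∧ k ≤ n ∧ a + (k : ZMod n) ∈ Q then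
    a + ((Nat.find h : ℕ) : ZMod n)
  else a

/-- The previous vertex of `Q` strictly anticlockwise before `a`. -/
noncomputable def cprev (n : ℕ) (Q : Finset (ZMod n)) (a : ZMod n) : ZMod n :=
  if h : ∃ k : ℕ, 0 < k ∧ k ≤ n ∧ a - (k : ZMod n) ∈ Q then
    a - ((Nat.find h : ℕ) : ZMod n)
  else a

/-- `(a,b)` is a (directed, clockwise) edge of the tile `Q`:
`b` is the next vertex of `Q` clockwise after `a`. -/
noncomputable def IsEdge (n : ℕ) (Q : Finset (ZMod n)) (a b : ZMod n) : Prop :=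
  a ∈ Q ∧ b ∈ Q ∧ a ≠ b ∧ b = cnext n Q a

/-- `x` lies strictly inside the clockwise arc from `a` to `b`. -/
def Between (n : ℕ) (a x b : ZMod n) : Prop :=
  0 < (x - a).val ∧ (x - a).val < (b - a).val

/-- The chords `{a,b}` and `{c,d}` of a convex `m`-gon cross in its interior. -/
def Crosses (m : ℕ) (a b c d : ZMod m) : Prop :=
  Between m a c b ∧ Between m b d a

/-- A tiling of the convex `n`-gon by pairwise non-crossing diagonals, recorded by
its set of tiles.  Every tile has at least 3 vertices, every boundary edge
`[i,i+1]` is an edge of exactly one tile, every diagonal (non-boundary edge of a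
tile) is shared with exactly one other tile (traversed in the opposite
direction), two distinct tiles meet in at most one edge, and edges of tiles do
not cross. -/
structure PolygonTiling (n : ℕ) where
  tiles : Finset (Finset (ZMod n))
  three_le : ∀ Q ∈ tiles, 3 ≤ Q.card
  boundary_edge : ∀ i : ZMod n, ∃! Q, Q ∈ tiles ∧ IsEdge n Q i (i + 1)
  diag_shared : ∀ Q ∈ tiles, ∀ a b : ZMod n, IsEdge n Q a b → b ≠ a + 1 →
    ∃! Q', Q' ∈ tiles ∧ Q' ≠ Q ∧ IsEdge n Q' b a
  inter_small : ∀ Q ∈ tiles, ∀ Q' ∈ tiles, Q ≠ Q' → (Q ∩ Q').card ≤ 2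
  noncross : ∀ Q ∈ tiles, ∀ Q' ∈ tiles, ∀ a b c d : ZMod n,
    IsEdge n Q a b → IsEdge n Q' c d → ¬ Crosses n a b c d

/-- The set of diagonals of a tiling, as unordered pairs of vertices. -/
def diagonalsSet (n : ℕ) (T : PolygonTiling n) : Set (Finset (ZMod n)) :=
  {e | ∃ Q ∈ T.tiles, ∃ a b : ZMod n, IsEdge n Q a b ∧ b ≠ a + 1 ∧ e = {a, b}}

/-- One step of Scott's strand construction.  A state `(Q, a)` means the strand is
entering tile `Q` through its directed edge `(a, cnext Q a)`.  Inside `Q` the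
strand uses the segment parallel to the edge `[cprev Q a, a]`, oriented from `a`
towards `p := cprev Q a`, leaving `Q` through the edge `(pp, p)` where
`pp := cprev Q p`.  If that edge is a boundary edge the strand terminates at the
vertex `p`; otherwise it continues into the unique other tile having this edge. -/
noncomputable def scottStep (n : ℕ) (T : PolygonTiling n) :
    Finset (ZMod n) × ZMod n → (Finset (ZMod n) × ZMod n) ⊕ ZMod n := fun s =>
  let Q := s.1
  let a := s.2
  let p := cprev n Q a
  let pp := cprev n Q p
  if p = pp + 1 then Sum.inr p
  else if h : ∃ Q', Q' ∈ T.tiles ∧ Q' ≠ Q ∧ IsEdge n Q' p pp then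
    Sum.inl (Classical.choose h, p)
  else Sum.inr p

/-- The tile in which the strand starting at vertex `x` begins: the unique tile
containing the boundary edge `(x, x+1)`. -/
noncomputable def startTile (n : ℕ) (T : PolygonTiling n) (x : ZMod n) :
    Finset (ZMod n) :=
  Classical.choose (T.boundary_edge x)

/-- The sequence of states of the strand starting at vertex `x`
(`none` after the strand has terminated). -/
noncomputable def strandSeq (n : ℕ) (T : PolygonTiling n) (x : ZMod n) :
    ℕ → Option (Finset (ZMod n) × ZMod n)
  | 0 => some (startTile n T x, x)
  | k + 1 =>
    match strandSeq n T x k with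
    | none => none
    | some s =>
      match scottStep n T s with
      | Sum.inl s' => some s'
      | Sum.inr _ => none

/-- The strand starting at `x` uses a strand segment of tile `Q`, entering `Q`
in state `s = (Q, a)`. -/
def StrandVisits (n : ℕ) (T : PolygonTiling n) (x : ZMod n)
    (s : Finset (ZMod n) × ZMod n) : Prop :=
  ∃ k : ℕ, strandSeq n T x k = some s

/-- Follow a strand for at most `fuel` steps, returning its final vertex. -/
noncomputable def scottRun (n : ℕ) (T : PolygonTiling n) :
    ℕ → Finset (ZMod n) × ZMod n → ZMod n
  | 0, s => s.2
  | k + 1, s =>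
    match scottStep n T s with
    | Sum.inr y => y
    | Sum.inl s' => scottRun n T k s'

/-- The Scott map of the tiling `T`: the strand starting at vertex `x` ends at
vertex `scott n T x`.  (A strand uses at most one segment per tile, so
`T.tiles.card` steps always suffice.) -/
noncomputable def scott (n : ℕ) (T : PolygonTiling n) (x : ZMod n) : ZMod n :=
  scottRun n T T.tiles.card (startTile n T x, x)

/-- A triangulation: all tiles are triangles. -/
def IsTriangulation (n : ℕ) (T : PolygonTiling n) : Prop :=
  ∀ Q ∈ T.tiles, Q.card = 3

/-- An ear of a tiling: a tile exactly one of whose edges is a diagonal. -/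
noncomputable def IsEar (n : ℕ) (T : PolygonTiling n) (Q : Finset (ZMod n)) : Prop :=
  Q ∈ T.tiles ∧ ∃! p : ZMod n × ZMod n, IsEdge n Q p.1 p.2 ∧ p.2 ≠ p.1 + 1

/-- A vertex is simple if it is not an endpoint of any diagonal. -/
def IsSimpleVertex (n : ℕ) (T : PolygonTiling n) (v : ZMod n) : Prop :=
  ∀ e ∈ diagonalsSet n T, v ∉ e

/-- The open dual graph of a tiling: one vertex per tile, two tiles adjacent iff
they share a diagonal. -/
noncomputable def dualGraph (n : ℕ) (T : PolygonTiling n) :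
    SimpleGraph {Q // Q ∈ T.tiles} where
  Adj Q Q' := Q ≠ Q' ∧ ∃ a b : ZMod n, b ≠ a + 1 ∧
    ((IsEdge n Q.1 a b ∧ IsEdge n Q'.1 b a) ∨ (IsEdge n Q.1 b a ∧ IsEdge n Q'.1 a b))
  symm := by
    constructor
    rintro Q Q' ⟨hne, a, b, hb, h⟩
    refine ⟨hne.symm, a, b, hb, ?_⟩
    rcases h with ⟨h1, h2⟩ | ⟨h1, h2⟩
    · exact Or.inr ⟨h2, h1⟩
    · exact Or.inl ⟨h2, h1⟩
  loopless := by constructor; rintro Q ⟨hne, -⟩; exact hne rfl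

/-- `T'` is obtained from `T` by a single flip: a quadrilateral `a,b,c,d`
(clockwise) tiled by the triangles `{a,b,c}, {a,c,d}` (diagonal `[a,c]`) is
retiled by the triangles `{a,b,d}, {b,c,d}` (diagonal `[b,d]`). -/
def FlipStep (n : ℕ) (T T' : PolygonTiling n) : Prop :=
  ∃ a b c d : ZMod n, Between n a b c ∧ Between n c d a ∧
    ({a, b, c} : Finset (ZMod n)) ∈ T.tiles ∧ ({a, c, d} : Finset (ZMod n)) ∈ T.tiles ∧
    T'.tiles = (T.tiles \ {({a, b, c} : Finset (ZMod n)), {a, c, d}}) ∪ {{a, b, d}, {b, c, d}}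

/-- Flip equivalence: the equivalence relation generated by flips. -/
def FlipEquiv (n : ℕ) (T T' : PolygonTiling n) : Prop :=
  Relation.EqvGen (FlipStep n) T T'

/-- The midpoint of the (clockwise) tile edge starting at vertex `a`, recorded as
a vertex of the refined `2n`-gon (vertex `v` of the polygon becomes `2v`). -/
def midpt (n : ℕ) (a : ZMod n) : ZMod (2 * n) := ((2 * a.val + 1 : ℕ) : ZMod (2 * n))

/-- The first vertex of the edge through which the strand segment entering tile `Q`
in state `(Q,a)` leaves `Q`. -/
noncomputable def segTarget (n : ℕ) (Q : Finset (ZMod n)) (a : ZMod n) : ZMod n :=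
  cprev n Q (cprev n Q a)

/-- The strand segments of tile `Q` entering in states `(Q,a)` and `(Q,c)` cross
inside `Q` (their chords, joining midpoints of edges of `Q`, interleave). -/
noncomputable def SegCross (n : ℕ) (Q : Finset (ZMod n)) (a c : ZMod n) : Prop :=
  Crosses (2 * n) (midpt n a) (midpt n (segTarget n Q a))
    (midpt n c) (midpt n (segTarget n Q c))

/-- The set of tiles inside which the strands starting at `x` and at `y` cross. -/
noncomputable def crossingTiles (n : ℕ) (T : PolygonTiling n) (x y : ZMod n) :
    Set (Finset (ZMod n)) :=
  {Q | Q ∈ T.tiles ∧ ∃ a c : ZMod n,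
    StrandVisits n T x (Q, a) ∧ StrandVisits n T y (Q, c) ∧ SegCross n Q a c}

/-- `v` lies on the closed clockwise arc from `i` to `j`. -/
def InArc (n : ℕ) (i j v : ZMod n) : Prop := (v - i).val ≤ (j - i).val

/-!
Let `w = i + 1`. The strand starting at `i` enters the tile on the boundary edge `(i, w)`. While
it meets triangles containing `w`, it turns around `w`, passing through the edge `(w, p)` of each
triangle `{a, w, p}` into the next tile at `w`; once it has swept past all tiles at `w` it ends
at `w + 1`. At the first tile at `w` that is not a triangle it leaves through an edge not incident
to `w`; from then on every tile it enters cuts off a strictly longer arc around `w` with the edge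
it enters through, so it never returns and cannot end at `w + 1`. Hence `scott T i = i + 2` iff
all tiles at `w` are triangles (`scott_eq_add_two_iff`).

This property is invariant under flips, which only exchange triangles, and it holds when
`{i, w, i + 2}` is a tile. Conversely, if all tiles at `w` are triangles, flipping the diagonal
`[w, p]` of the triangle `{i, w, p}` on the edge `(i, w)` replaces it by a triangle `{i, w, u}`
with `u` closer to `w`, until the ear `{i, w, i + 2}` appears.
-/

def cwDist {n : ℕ} (a b : ZMod n) : ℕ := (b - a).val

-- Seen from a base point `o`, vertices have positions `cwDist o ·` in `ℕ`, and `Between` is the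
-- circular order on positions obtained by looping `<`: chord geometry becomes linear arithmetic.
attribute [local instance] LT.toSBtw

section ClockwiseDistance
variable {n : ℕ}

lemma cwDist_eq_zero_iff {a b : ZMod n} : cwDist a b = 0 ↔ a = b := by
  rw [cwDist, ZMod.val_eq_zero, sub_eq_zero, eq_comm]

@[simp] lemma cwDist_self (a : ZMod n) : cwDist a a = 0 := cwDist_eq_zero_iff.2 rfl

lemma cwDist_pos_iff {a b : ZMod n} : 0 < cwDist a b ↔ a ≠ b := by
  rw [Nat.pos_iff_ne_zero, Ne, cwDist_eq_zero_iff]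

lemma cwDist_add_natCast (a : ZMod n) {k : ℕ} (hk : k < n) : cwDist a (a + k) = k := by
  rw [cwDist, add_sub_cancel_left, ZMod.val_natCast_of_lt hk]

lemma cwDist_sub_natCast (a : ZMod n) {k : ℕ} (hk : k < n) : cwDist (a - (k : ZMod n)) a = k := by
  rw [cwDist, sub_sub_cancel, ZMod.val_natCast_of_lt hk]

lemma cwDist_add_one (hn : 1 < n) (a : ZMod n) : cwDist a (a + 1) = 1 := by
  exact_mod_cast cwDist_add_natCast a hn

lemma cwDist_add_two (hn : 2 < n) (a : ZMod n) : cwDist a (a + 2) = 2 := by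
  exact_mod_cast cwDist_add_natCast a hn

lemma Between.ne_add_one {a x b : ZMod n} (hn : 1 < n) (h : Between n a x b) :
    b ≠ a + 1 := by
  rintro rfl
  obtain ⟨h1, h2⟩ := h
  change 0 < cwDist a x at h1
  change cwDist a x < cwDist a (a + 1) at h2
  rw [cwDist_add_one hn] at h2
  omega

variable [NeZero n]

lemma cwDist_lt (a b : ZMod n) : cwDist a b < n := ZMod.val_lt _

lemma add_cwDist (a b : ZMod n) : a + (cwDist a b : ZMod n) = b := by
  rw [cwDist, ZMod.natCast_val, ZMod.cast_id]; ring

lemma sub_cwDist (a b : ZMod n) : b - (cwDist a b : ZMod n) = a := by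
  rw [cwDist, ZMod.natCast_val, ZMod.cast_id]; ring

lemma cwDist_right_inj {a b c : ZMod n} : cwDist a b = cwDist a c ↔ b = c :=
  ⟨fun h => by rw [← add_cwDist a b, h, add_cwDist], fun h => h ▸ rfl⟩

lemma cwDist_left_inj {a b c : ZMod n} : cwDist b a = cwDist c a ↔ b = c :=
  ⟨fun h => by rw [← sub_cwDist b a, h, sub_cwDist], fun h => h ▸ rfl⟩

lemma cwDist_add_cwDist (a b c : ZMod n) :
    cwDist a c = cwDist a b + cwDist b c ∨ cwDist a c + n = cwDist a b + cwDist b c := by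
  have h := ZMod.val_add (b - a) (c - b)
  rw [show b - a + (c - b) = c - a by ring] at h
  have hab := cwDist_lt a b
  have hbc := cwDist_lt b c
  unfold cwDist at *
  rcases Nat.lt_or_ge ((b - a).val + (c - b).val) n with hlt | hge
  · left; rw [h, Nat.mod_eq_of_lt hlt]
  · right; rw [h, Nat.mod_eq_sub_mod hge, Nat.mod_eq_of_lt (by omega)]; omega

lemma cwDist_add_cwDist_swap {a b : ZMod n} (h : a ≠ b) : cwDist a b + cwDist b a = n := by
  have := cwDist_pos_iff.2 h
  rcases cwDist_add_cwDist a b a with h1 | h1 <;> simp only [cwDist_self] at h1 <;> omega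

lemma cwDist_eq_sub {o p q : ZMod n} (h : cwDist o p ≤ cwDist o q) :
    cwDist p q = cwDist o q - cwDist o p := by
  have := cwDist_lt p q
  have := cwDist_lt o q
  rcases cwDist_add_cwDist o p q with h1 | h1 <;> omega

lemma cwDist_eq_add_sub {o p q : ZMod n} (h : cwDist o q < cwDist o p) :
    cwDist p q = n - cwDist o p + cwDist o q := by
  have := cwDist_lt o p
  rcases cwDist_add_cwDist o p q with h1 | h1 <;> omega

lemma between_iff_sbtw (o : ZMod n) {p x q : ZMod n} :
    Between n p x q ↔ sbtw (cwDist o p) (cwDist o x) (cwDist o q) := by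
  change 0 < cwDist p x ∧ cwDist p x < cwDist p q ↔ _
  rw [sbtw_iff]
  have := cwDist_lt o p
  have := cwDist_lt o x
  have := cwDist_lt o q
  rcases le_or_gt (cwDist o p) (cwDist o x) with hx | hx <;>
    [rw [cwDist_eq_sub hx]; rw [cwDist_eq_add_sub hx]] <;>
    rcases le_or_gt (cwDist o p) (cwDist o q) with hq | hq <;>
    [rw [cwDist_eq_sub hq]; rw [cwDist_eq_add_sub hq]; rw [cwDist_eq_sub hq];
      rw [cwDist_eq_add_sub hq]] <;> omega

lemma crosses_iff_sbtw (o : ZMod n) {a b c d : ZMod n} :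
    Crosses n a b c d ↔ sbtw (cwDist o a) (cwDist o c) (cwDist o b) ∧
      sbtw (cwDist o b) (cwDist o d) (cwDist o a) := by
  rw [Crosses, between_iff_sbtw o, between_iff_sbtw o]

end ClockwiseDistance

lemma not_subset_pair {α : Type*} [DecidableEq α] {Q : Finset α} (h3 : 3 ≤ Q.card) (u v : α) :
    ¬ Q ⊆ {u, v} := fun h => by
  have := Finset.card_le_card h
  have := Finset.card_le_two (a := u) (b := v)
  omega

lemma subset_of_two_lt_card_inter {α : Type*} [DecidableEq α] {R S : Finset α}
    (hS : S.card ≤ 3) (h : 2 < (R ∩ S).card) : S ⊆ R :=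
  Finset.inter_eq_right.1
    (Finset.eq_of_subset_of_card_le Finset.inter_subset_right (by omega))

lemma triple_rotate {α : Type*} [DecidableEq α] (x y z : α) :
    ({x, y, z} : Finset α) = {y, z, x} := by
  ext
  simp only [Finset.mem_insert, Finset.mem_singleton]
  tauto

section CyclicNeighbours
variable {n : ℕ} [NeZero n] {Q : Finset (ZMod n)}

lemma cnext_spec {a x : ZMod n} (hx : x ∈ Q) (hxa : x ≠ a) :
    cnext n Q a ∈ Q ∧ cnext n Q a ≠ a ∧
      ∀ c ∈ Q, c ≠ a → cwDist a (cnext n Q a) ≤ cwDist a c := by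
  have hvalid : ∀ c ∈ Q, c ≠ a →
      0 < cwDist a c ∧ cwDist a c ≤ n ∧ a + (cwDist a c : ZMod n) ∈ Q := fun c hc hca =>
    ⟨cwDist_pos_iff.2 hca.symm, (cwDist_lt a c).le, by rwa [add_cwDist]⟩
  have hex : ∃ k : ℕ, 0 < k ∧ k ≤ n ∧ a + (k : ZMod n) ∈ Q := ⟨_, hvalid x hx hxa⟩
  obtain ⟨hk0, -, hkQ⟩ := Nat.find_spec hex
  have hk : cwDist a (a + (Nat.find hex : ZMod n)) = Nat.find hex :=
    cwDist_add_natCast a ((Nat.find_min' hex (hvalid x hx hxa)).trans_lt (cwDist_lt a x))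
  rw [cnext, dif_pos hex]
  refine ⟨hkQ, fun h => ?_, fun c hc hca => ?_⟩
  · rw [h, cwDist_self] at hk
    omega
  · rw [hk]
    exact Nat.find_min' hex (hvalid c hc hca)

lemma cprev_spec {a x : ZMod n} (hx : x ∈ Q) (hxa : x ≠ a) :
    cprev n Q a ∈ Q ∧ cprev n Q a ≠ a ∧
      ∀ c ∈ Q, c ≠ a → cwDist (cprev n Q a) a ≤ cwDist c a := by
  have hvalid : ∀ c ∈ Q, c ≠ a →
      0 < cwDist c a ∧ cwDist c a ≤ n ∧ a - (cwDist c a : ZMod n) ∈ Q := fun c hc hca =>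
    ⟨cwDist_pos_iff.2 hca, (cwDist_lt c a).le, by rwa [sub_cwDist]⟩
  have hex : ∃ k : ℕ, 0 < k ∧ k ≤ n ∧ a - (k : ZMod n) ∈ Q := ⟨_, hvalid x hx hxa⟩
  obtain ⟨hk0, -, hkQ⟩ := Nat.find_spec hex
  have hk : cwDist (a - (Nat.find hex : ZMod n)) a = Nat.find hex :=
    cwDist_sub_natCast a ((Nat.find_min' hex (hvalid x hx hxa)).trans_lt (cwDist_lt x a))
  rw [cprev, dif_pos hex]
  refine ⟨hkQ, fun h => ?_, fun c hc hca => ?_⟩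
  · rw [h, cwDist_self] at hk
    omega
  · rw [hk]
    exact Nat.find_min' hex (hvalid c hc hca)

lemma cnext_eq_of_forall_le {a b : ZMod n} (hb : b ∈ Q) (hba : b ≠ a)
    (hmin : ∀ c ∈ Q, c ≠ a → cwDist a b ≤ cwDist a c) : cnext n Q a = b := by
  obtain ⟨h1, h2, h3⟩ := cnext_spec hb hba
  exact cwDist_right_inj.1 (le_antisymm (h3 b hb hba) (hmin _ h1 h2))

lemma cprev_eq_of_forall_le {a b : ZMod n} (hb : b ∈ Q) (hba : b ≠ a)
    (hmin : ∀ c ∈ Q, c ≠ a → cwDist b a ≤ cwDist c a) : cprev n Q a = b := by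
  obtain ⟨h1, h2, h3⟩ := cprev_spec hb hba
  exact cwDist_left_inj.1 (le_antisymm (h3 b hb hba) (hmin _ h1 h2))

lemma cnext_cprev {a x : ZMod n} (ha : a ∈ Q) (hx : x ∈ Q) (hxa : x ≠ a) :
    cnext n Q (cprev n Q a) = a := by
  obtain ⟨-, hpa, hmin⟩ := cprev_spec hx hxa
  refine cnext_eq_of_forall_le ha hpa.symm fun c hc hcp => ?_
  by_cases hca : c = a
  · rw [hca]
  have := hmin c hc hca
  have := cwDist_pos_iff.2 (Ne.symm hcp)
  have := cwDist_lt c a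
  rcases cwDist_add_cwDist (cprev n Q a) c a with h | h <;> omega

lemma cprev_cnext {a x : ZMod n} (ha : a ∈ Q) (hx : x ∈ Q) (hxa : x ≠ a) :
    cprev n Q (cnext n Q a) = a := by
  obtain ⟨-, hpa, hmin⟩ := cnext_spec hx hxa
  refine cprev_eq_of_forall_le ha hpa.symm fun c hc hcp => ?_
  by_cases hca : c = a
  · rw [hca]
  have := hmin c hc hca
  have := cwDist_pos_iff.2 hcp
  have := cwDist_lt a c
  rcases cwDist_add_cwDist a c (cnext n Q a) with h | h <;> omega

lemma isEdge_cnext {a : ZMod n} (hQ : 1 < Q.card) (ha : a ∈ Q) : IsEdge n Q a (cnext n Q a) :=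
  have ⟨_, hx, hxa⟩ := Finset.exists_mem_ne hQ a
  ⟨ha, (cnext_spec hx hxa).1, (cnext_spec hx hxa).2.1.symm, rfl⟩

lemma isEdge_cprev {a : ZMod n} (hQ : 1 < Q.card) (ha : a ∈ Q) : IsEdge n Q (cprev n Q a) a :=
  have ⟨_, hx, hxa⟩ := Finset.exists_mem_ne hQ a
  ⟨(cprev_spec hx hxa).1, ha, (cprev_spec hx hxa).2.1, (cnext_cprev ha hx hxa).symm⟩

lemma IsEdge.cprev_eq {a b : ZMod n} (he : IsEdge n Q a b) : cprev n Q b = a := by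
  rw [he.2.2.2]
  exact cprev_cnext he.1 he.2.1 he.2.2.1.symm

lemma IsEdge.cwDist_le {a b c : ZMod n} (he : IsEdge n Q a b) (hc : c ∈ Q) (hca : c ≠ a) :
    cwDist a b ≤ cwDist a c :=
  he.2.2.2 ▸ (cnext_spec he.2.1 he.2.2.1.symm).2.2 c hc hca

lemma IsEdge.cwDist_le' {a b c : ZMod n} (he : IsEdge n Q a b) (hc : c ∈ Q) (hcb : c ≠ b) :
    cwDist a b ≤ cwDist c b :=
  he.cprev_eq ▸ (cprev_spec he.1 he.2.2.1).2.2 c hc hcb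

end CyclicNeighbours

section Triangles
variable {n : ℕ}

lemma mem_triple {x y z c : ZMod n} (hc : c ∈ ({x, y, z} : Finset (ZMod n))) :
    c = x ∨ c = y ∨ c = z := by
  simpa using hc

variable [NeZero n] {x y z : ZMod n}

lemma triangle_cnext (h1 : 0 < cwDist x y) (h2 : cwDist x y < cwDist x z) :
    cnext n {x, y, z} x = y ∧ cnext n {x, y, z} y = z ∧ cnext n {x, y, z} z = x := by
  have := cwDist_lt x z
  have hyx : y ≠ x := (cwDist_pos_iff.1 h1).symm
  have hzy : z ≠ y := fun h => by rw [h] at h2; omega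
  have hzx : z ≠ x := (cwDist_pos_iff.1 (h1.trans h2)).symm
  have dyz := cwDist_eq_sub h2.le
  have dyx := cwDist_eq_add_sub (o := x) (p := y) (q := x) (by simpa using h1)
  have dzx := cwDist_eq_add_sub (o := x) (p := z) (q := x) (by simp; omega)
  have dzy := cwDist_eq_add_sub (o := x) (p := z) (q := y) h2
  simp only [cwDist_self] at dyx dzx
  refine ⟨cnext_eq_of_forall_le (by simp) hyx ?_, cnext_eq_of_forall_le (by simp) hzy ?_,
    cnext_eq_of_forall_le (by simp) hzx.symm ?_⟩ <;>
  · intro c hc hca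
    rcases mem_triple hc with rfl | rfl | rfl <;> first | exact absurd rfl hca | omega

lemma isEdge_triangle (h1 : 0 < cwDist x y) (h2 : cwDist x y < cwDist x z) :
    IsEdge n {x, y, z} x y ∧ IsEdge n {x, y, z} y z ∧ IsEdge n {x, y, z} z x := by
  obtain ⟨e1, e2, e3⟩ := triangle_cnext h1 h2
  have hyz : y ≠ z := fun h => by rw [h] at h2; omega
  have hxz : x ≠ z := cwDist_pos_iff.1 (h1.trans h2)
  exact ⟨⟨by simp, by simp, cwDist_pos_iff.1 h1, e1.symm⟩, ⟨by simp, by simp, hyz, e2.symm⟩,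
    ⟨by simp, by simp, hxz.symm, e3.symm⟩⟩

lemma isEdge_triangle_iff (h1 : 0 < cwDist x y) (h2 : cwDist x y < cwDist x z) {u v : ZMod n} :
    IsEdge n {x, y, z} u v ↔ u = x ∧ v = y ∨ u = y ∧ v = z ∨ u = z ∧ v = x := by
  obtain ⟨e1, e2, e3⟩ := triangle_cnext h1 h2
  obtain ⟨f1, f2, f3⟩ := isEdge_triangle h1 h2
  constructor
  · rintro ⟨hu, -, -, rfl⟩
    rcases mem_triple hu with rfl | rfl | rfl <;> simp [e1, e2, e3]
  · rintro (⟨rfl, rfl⟩ | ⟨rfl, rfl⟩ | ⟨rfl, rfl⟩) <;> assumption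

lemma card_triangle (h1 : 0 < cwDist x y) (h2 : cwDist x y < cwDist x z) :
    ({x, y, z} : Finset (ZMod n)).card = 3 := by
  obtain ⟨⟨-, -, hxy, -⟩, ⟨-, -, hyz, -⟩, ⟨-, -, hzx, -⟩⟩ := isEdge_triangle h1 h2
  exact Finset.card_eq_three.2 ⟨x, y, z, hxy, hzx.symm, hyz, rfl⟩

lemma eq_triangle_of_card_eq_three {Q : Finset (ZMod n)} (hQ : Q.card = 3) {a : ZMod n}
    (ha : a ∈ Q) : Q = {a, cnext n Q a, cprev n Q a} ∧ 0 < cwDist a (cnext n Q a) ∧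
      cwDist a (cnext n Q a) < cwDist a (cprev n Q a) := by
  obtain ⟨x, hx, hxa⟩ := Finset.exists_mem_ne (s := Q) (by omega) a
  obtain ⟨hb, hba, hminb⟩ := cnext_spec hx hxa
  obtain ⟨hc, hca, hminc⟩ := cprev_spec hx hxa
  set b := cnext n Q a
  set c := cprev n Q a
  have hbc : b ≠ c := by
    intro h
    refine not_subset_pair hQ.ge a b fun d hd => ?_
    rw [Finset.mem_insert, Finset.mem_singleton, or_iff_not_imp_left]
    intro hda
    have h1 := hminb d hd hda
    have h2 := hminc d hd hda
    rw [← h] at h2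
    have := cwDist_add_cwDist_swap (Ne.symm hda)
    have := cwDist_add_cwDist_swap hba.symm
    exact (cwDist_right_inj (a := a)).1 (by omega)
  have hlt : cwDist a b < cwDist a c :=
    (hminb c hc hca).lt_of_ne fun h => hbc (cwDist_right_inj.1 h)
  refine ⟨(Finset.eq_of_subset_of_card_le (fun d hd => ?_) ?_).symm,
    cwDist_pos_iff.2 hba.symm, hlt⟩
  · rcases mem_triple hd with rfl | rfl | rfl <;> assumption
  · rw [hQ, Finset.card_eq_three.2 ⟨a, b, c, hba.symm, hca.symm, hbc, rfl⟩]

end Triangles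

section Tilings
variable {n : ℕ} {Q Q' : Finset (ZMod n)} {u v : ZMod n}

lemma PolygonTiling.one_lt_card (T : PolygonTiling n) (hQ : Q ∈ T.tiles) : 1 < Q.card := by
  have := T.three_le Q hQ
  omega

lemma startTile_spec (T : PolygonTiling n) (x : ZMod n) :
    startTile n T x ∈ T.tiles ∧ IsEdge n (startTile n T x) x (x + 1) :=
  (Classical.choose_spec (T.boundary_edge x)).1

variable [NeZero n]

lemma IsEdge.ne_add_one (hn : 3 ≤ n) (h3 : 3 ≤ Q.card) (he : IsEdge n Q u v) : u ≠ v + 1 := by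
  intro huv
  have hvu : cwDist v u = 1 := by rw [huv]; exact cwDist_add_one (by omega) v
  have := cwDist_add_cwDist_swap he.2.2.1
  refine not_subset_pair h3 u v fun c hc => ?_
  rw [Finset.mem_insert, Finset.mem_singleton, or_iff_not_imp_left]
  intro hcu
  have := he.cwDist_le hc hcu
  have := cwDist_lt u c
  exact (cwDist_right_inj (a := u)).1 (by omega)

lemma IsEdge.not_isEdge_swap (h3 : 3 ≤ Q.card) (he : IsEdge n Q u v) : ¬ IsEdge n Q v u := by
  intro he'
  have := cwDist_add_cwDist_swap he.2.2.1
  refine not_subset_pair h3 u v fun c hc => ?_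
  rw [Finset.mem_insert, Finset.mem_singleton, or_iff_not_imp_left]
  intro hcu
  by_contra hcv
  have := he.cwDist_le hc hcu
  have := he'.cwDist_le hc hcv
  have := cwDist_lt u c
  have := cwDist_lt v c
  rcases cwDist_add_cwDist u v c with h | h <;> omega

namespace PolygonTiling
variable (T : PolygonTiling n)

lemma eq_of_isEdge (hn : 3 ≤ n) (hQ : Q ∈ T.tiles) (hQ' : Q' ∈ T.tiles)
    (he : IsEdge n Q u v) (he' : IsEdge n Q' u v) : Q = Q' := by
  by_cases hb : v = u + 1
  · subst hb
    exact (T.boundary_edge u).unique ⟨hQ, he⟩ ⟨hQ', he'⟩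
  obtain ⟨S, ⟨hS, hSQ, hSe⟩, -⟩ := T.diag_shared Q hQ u v he hb
  have hS' : Q' ≠ S := by
    rintro rfl
    exact he'.not_isEdge_swap (T.three_le Q' hQ') hSe
  exact (T.diag_shared S hS v u hSe (he.ne_add_one hn (T.three_le Q hQ))).unique
    ⟨hQ, hSQ.symm, he⟩ ⟨hQ', hS', he'⟩

lemma not_crosses_swap {a b c d : ZMod n} (hQ : Q ∈ T.tiles) (hQ' : Q' ∈ T.tiles)
    (he : IsEdge n Q a b) (he' : IsEdge n Q' c d) : ¬ Crosses n a b d c := by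
  rw [crosses_iff_sbtw a]
  intro h
  refine T.noncross Q' hQ' Q hQ c d a b he' he ?_
  rw [crosses_iff_sbtw a]
  simp only [sbtw_iff] at h ⊢
  omega

-- Otherwise the edge `(w, cnext n B w)` of `B` would cross the edge `(p, a)` of `Q`.
lemma eq_of_cnext_mem_corner (hn : 3 ≤ n) {B : Finset (ZMod n)} {a w p : ZMod n}
    (hQ : Q ∈ T.tiles) (hwp : IsEdge n Q w p) (hpa : IsEdge n Q p a)
    (hB : B ∈ T.tiles) (hwB : w ∈ B) (h1 : cwDist w p ≤ cwDist w (cnext n B w))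
    (h2 : cwDist w (cnext n B w) < cwDist w a) : B = Q := by
  have he := isEdge_cnext (T.one_lt_card hB) hwB
  rcases h1.lt_or_eq with h1 | h1
  · have := cwDist_pos_iff.2 hwp.2.2.1
    refine absurd ?_ (T.noncross B hB Q hQ w _ p a he hpa)
    rw [crosses_iff_sbtw w]
    simp only [cwDist_self, sbtw_iff]
    omega
  · rw [← cwDist_right_inj.1 h1] at he
    exact T.eq_of_isEdge hn hB hQ he hwp

end PolygonTiling

end Tilings

section TileVertices
variable {n : ℕ} [NeZero n] {Q : Finset (ZMod n)} {a b w c : ZMod n}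

lemma cwDist_le_cwDist_cprev (a : ZMod n) (hc : c ∈ Q) : cwDist a c ≤ cwDist a (cprev n Q a) := by
  by_cases hca : c = a
  · simp [hca]
  obtain ⟨-, hpa, hmin⟩ := cprev_spec hc hca
  have := hmin c hc hca
  have := cwDist_add_cwDist_swap hpa
  have := cwDist_add_cwDist_swap hca
  omega

lemma IsEdge.cprev_eq_of_between (he : IsEdge n Q a b) (hw : Between n a w b) :
    w ∉ Q ∧ cprev n Q w = a := by
  obtain ⟨hw0, hwb⟩ := hw
  change 0 < cwDist a w at hw0
  change cwDist a w < cwDist a b at hwb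
  have hwa : w ≠ a := (cwDist_pos_iff.1 hw0).symm
  have hwQ : w ∉ Q := fun hwQ => absurd (he.cwDist_le hwQ hwa) (by omega)
  refine ⟨hwQ, cprev_eq_of_forall_le he.1 hwa.symm fun c hc _ => ?_⟩
  by_cases hca : c = a
  · rw [hca]
  have := he.cwDist_le hc hca
  rw [cwDist_eq_add_sub (o := a) (p := c) (q := w) (by omega)]
  omega

lemma cwDist_cnext_le_cprev_cprev (h3 : 3 ≤ Q.card) (ha : a ∈ Q) :
    0 < cwDist a (cnext n Q a) ∧ cwDist a (cnext n Q a) ≤ cwDist a (cprev n Q (cprev n Q a)) ∧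
      cwDist a (cprev n Q (cprev n Q a)) < cwDist a (cprev n Q a) := by
  have hQ : 1 < Q.card := by omega
  have hab := isEdge_cnext hQ ha
  have hpa := isEdge_cprev hQ ha
  have hppp := isEdge_cprev hQ hpa.1
  have hppa : cprev n Q (cprev n Q a) ≠ a := by
    intro h
    rw [h] at hppp
    exact hppp.not_isEdge_swap h3 hpa
  refine ⟨cwDist_pos_iff.2 hab.2.2.1, hab.cwDist_le hppp.1 hppa,
    (cwDist_le_cwDist_cprev a hppp.1).lt_of_ne fun h => hppp.2.2.1 (cwDist_right_inj.1 h)⟩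

lemma cprev_cprev_eq_cnext_iff (h3 : 3 ≤ Q.card) (ha : a ∈ Q) :
    cprev n Q (cprev n Q a) = cnext n Q a ↔ Q.card = 3 := by
  obtain ⟨hb, hbpp, hppp⟩ := cwDist_cnext_le_cprev_cprev h3 ha
  have hQ : 1 < Q.card := by omega
  have hpa := isEdge_cprev hQ ha
  have hppp' := isEdge_cprev hQ hpa.1
  constructor
  · intro h
    refine le_antisymm (le_trans (Finset.card_le_card (t := {a, cnext n Q a, cprev n Q a})
      fun c hc => ?_) Finset.card_le_three) h3
    rw [Finset.mem_insert, Finset.mem_insert, Finset.mem_singleton]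
    by_cases hca : c = a
    · exact Or.inl hca
    by_cases hcp : c = cprev n Q a
    · exact Or.inr (Or.inr hcp)
    refine Or.inr (Or.inl ((cwDist_right_inj (a := a)).1 ?_))
    have h1 := (isEdge_cnext hQ ha).cwDist_le hc hca
    have h2 := hppp'.cwDist_le' hc hcp
    have hc' := cwDist_le_cwDist_cprev a hc
    rw [h, cwDist_eq_sub (o := a) (hbpp.trans hppp.le), cwDist_eq_sub (o := a) hc'] at h2
    omega
  · intro h
    obtain ⟨hQeq, -, -⟩ := eq_triangle_of_card_eq_three h ha
    have hmem := (Finset.ext_iff.1 hQeq _).1 hppp'.1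
    rcases mem_triple hmem with h' | h' | h'
    · rw [h', cwDist_self] at hbpp
      omega
    · exact h'
    · exact absurd h' hppp'.2.2.1

lemma IsEdge.isEdge_cprev_of_card_eq_three (h3 : Q.card = 3) (he : IsEdge n Q a w) :
    IsEdge n Q w (cprev n Q a) := by
  have := isEdge_cprev (by omega) (isEdge_cprev (by omega) he.1).1
  rwa [(cprev_cprev_eq_cnext_iff h3.ge he.1).2 h3, ← he.2.2.2] at this

lemma IsEdge.cwDist_cnext_lt (h3 : 3 ≤ Q.card) (he : IsEdge n Q a w) :
    cwDist w (cnext n Q w) < cwDist w a := by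
  have hws := isEdge_cnext (by omega) he.2.1
  refine (hws.cwDist_le he.1 he.2.2.1).lt_of_ne fun h => ?_
  rw [cwDist_right_inj.1 h] at hws
  exact he.not_isEdge_swap h3 hws

end TileVertices

section Strands
variable {n : ℕ} (T : PolygonTiling n)

-- `F` collects the tiles the strand passes through, each once; this certifies that the fuel
-- `T.tiles.card` used by `scott` suffices.
def RunsTo (F : Finset (Finset (ZMod n))) (s : Finset (ZMod n) × ZMod n) (y : ZMod n) : Prop :=
  F ⊆ T.tiles ∧ ∀ fuel, F.card ≤ fuel → scottRun n T fuel s = y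

variable {T} {F : Finset (Finset (ZMod n))} {s s' : Finset (ZMod n) × ZMod n} {y : ZMod n}

lemma runsTo_of_scottStep_eq_inr (hs : s.1 ∈ T.tiles) (h : scottStep n T s = Sum.inr y) :
    RunsTo T {s.1} s y := by
  refine ⟨Finset.singleton_subset_iff.2 hs, fun fuel hfuel => ?_⟩
  rw [Finset.card_singleton] at hfuel
  obtain ⟨k, rfl⟩ : ∃ k, fuel = k + 1 := ⟨fuel - 1, by omega⟩
  simp only [scottRun, h]

lemma RunsTo.cons (hF : RunsTo T F s' y) (hs : s.1 ∈ T.tiles) (hsF : s.1 ∉ F)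
    (h : scottStep n T s = Sum.inl s') : RunsTo T (insert s.1 F) s y := by
  refine ⟨Finset.insert_subset hs hF.1, fun fuel hfuel => ?_⟩
  rw [Finset.card_insert_of_notMem hsF] at hfuel
  obtain ⟨k, rfl⟩ : ∃ k, fuel = k + 1 := ⟨fuel - 1, by omega⟩
  simp only [scottRun, h]
  exact hF.2 k (by omega)

lemma scott_eq_of_runsTo {x : ZMod n} (h : RunsTo T F (startTile n T x, x) y) : scott n T x = y :=
  h.2 _ (Finset.card_le_card h.1)

variable (T) [NeZero n] {Q : Finset (ZMod n)} {a : ZMod n}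

lemma scottStep_cases (hQ : Q ∈ T.tiles) (ha : a ∈ Q) :
    cprev n Q a = cprev n Q (cprev n Q a) + 1 ∧
        scottStep n T (Q, a) = Sum.inr (cprev n Q a) ∨
      cprev n Q a ≠ cprev n Q (cprev n Q a) + 1 ∧
        ∃ Q' ∈ T.tiles, Q' ≠ Q ∧ IsEdge n Q' (cprev n Q a) (cprev n Q (cprev n Q a)) ∧
          scottStep n T (Q, a) = Sum.inl (Q', cprev n Q a) := by
  by_cases hb : cprev n Q a = cprev n Q (cprev n Q a) + 1
  · exact Or.inl ⟨hb, by simp only [scottStep, if_pos hb]⟩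
  have hp := (isEdge_cprev (T.one_lt_card hQ) ha).1
  obtain ⟨Q', hQ', -⟩ := T.diag_shared Q hQ _ _ (isEdge_cprev (T.one_lt_card hQ) hp) hb
  have hex : ∃ Q', Q' ∈ T.tiles ∧ Q' ≠ Q ∧ IsEdge n Q' (cprev n Q a) (cprev n Q (cprev n Q a)) :=
    ⟨Q', hQ'⟩
  refine Or.inr ⟨hb, _, (Classical.choose_spec hex).1, (Classical.choose_spec hex).2.1,
    (Classical.choose_spec hex).2.2, ?_⟩
  simp only [scottStep, if_neg hb, dif_pos hex]

end Strands

-- For a tile `R` not containing `w`, the length of the arc around `w` cut off by the edge of `R`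
-- facing `w`.
noncomputable def gapAround {n : ℕ} (w : ZMod n) (R : Finset (ZMod n)) : ℕ :=
  cwDist (cprev n R w) (cnext n R (cprev n R w))

def AllTrianglesAt {n : ℕ} (T : PolygonTiling n) (v : ZMod n) : Prop :=
  ∀ Q ∈ T.tiles, v ∈ Q → Q.card = 3

namespace PolygonTiling
variable {n : ℕ} [NeZero n] (T : PolygonTiling n) {Q : Finset (ZMod n)} {a w : ZMod n}

lemma exists_runsTo_of_between (w : ZMod n) :
    ∀ k (Q : Finset (ZMod n)) (a : ZMod n), Q ∈ T.tiles → a ∈ Q →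
      Between n a w (cnext n Q a) → n - gapAround w Q ≤ k →
      ∃ F y, RunsTo T F (Q, a) y ∧ (∀ R ∈ F, w ∉ R ∧ gapAround w Q ≤ gapAround w R) ∧
        y ≠ w + 1 := by
  intro k
  induction k with
  | zero =>
    intro Q a hQ ha hw hk
    obtain ⟨-, hcp⟩ := (isEdge_cnext (T.one_lt_card hQ) ha).cprev_eq_of_between hw
    have := cwDist_lt a (cnext n Q a)
    rw [gapAround, hcp] at hk
    omega
  | succ k ih =>
    intro Q a hQ ha hw hk
    obtain ⟨hwQ, hcp⟩ := (isEdge_cnext (T.one_lt_card hQ) ha).cprev_eq_of_between hw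
    obtain ⟨-, hbpp, hppp⟩ := cwDist_cnext_le_cprev_cprev (T.three_le Q hQ) ha
    have hpQ := (isEdge_cprev (T.one_lt_card hQ) ha).1
    have hppQ := (isEdge_cprev (T.one_lt_card hQ) hpQ).1
    rw [between_iff_sbtw a, sbtw_iff, cwDist_self] at hw
    rcases scottStep_cases T hQ ha with ⟨hend, hstep⟩ | ⟨-, Q', hQ', -, he', hstep⟩
    · refine ⟨{Q}, _, runsTo_of_scottStep_eq_inr hQ hstep, by simp [hwQ], fun h => hwQ ?_⟩
      rwa [← add_right_cancel (hend.symm.trans h)]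
    have hw' : Between n (cprev n Q a) w (cnext n Q' (cprev n Q a)) := by
      rw [← he'.2.2.2, between_iff_sbtw a, sbtw_iff]
      omega
    obtain ⟨hwQ', hcp'⟩ := he'.cprev_eq_of_between (he'.2.2.2 ▸ hw')
    have hlt : gapAround w Q < gapAround w Q' := by
      rw [gapAround, gapAround, hcp, hcp', ← he'.2.2.2, cwDist_eq_add_sub (o := a) hppp]
      have := cwDist_lt a (cprev n Q a)
      omega
    obtain ⟨F, y, hrun, hF, hy⟩ := ih Q' _ hQ' he'.1 hw' (by omega)
    have hQF : Q ∉ F := fun h => absurd (hF Q h).2 (by omega)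
    refine ⟨insert Q F, y, hrun.cons hQ hQF hstep, ?_, hy⟩
    simp only [Finset.forall_mem_insert]
    exact ⟨⟨hwQ, le_rfl⟩, fun R hR => ⟨(hF R hR).1, hlt.le.trans (hF R hR).2⟩⟩

lemma exists_runsTo_of_card_ne_three (hQ : Q ∈ T.tiles) (he : IsEdge n Q a w)
    (h3 : Q.card ≠ 3) :
    ∃ F y, RunsTo T F (Q, a) y ∧ (∀ R ∈ F, w ∈ R → R = Q) ∧ y ≠ w + 1 := by
  obtain ⟨hw0, hwpp, hppp⟩ := cwDist_cnext_le_cprev_cprev (T.three_le Q hQ) he.1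
  rw [← he.2.2.2] at hw0 hwpp
  have hppw : cprev n Q (cprev n Q a) ≠ w := fun h =>
    h3 ((cprev_cprev_eq_cnext_iff (T.three_le Q hQ) he.1).1 (h.trans he.2.2.2))
  rcases scottStep_cases T hQ he.1 with ⟨hend, hstep⟩ | ⟨-, Q', hQ', -, he', hstep⟩
  · exact ⟨{Q}, _, runsTo_of_scottStep_eq_inr hQ hstep, by simp,
      fun h => hppw (add_right_cancel (hend.symm.trans h))⟩
  have hw' : Between n (cprev n Q a) w (cnext n Q' (cprev n Q a)) := by
    have := (cwDist_right_inj (a := a)).not.2 hppw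
    rw [← he'.2.2.2, between_iff_sbtw a, sbtw_iff]
    omega
  obtain ⟨F, y, hrun, hF, hy⟩ := T.exists_runsTo_of_between w _ Q' _ hQ' he'.1 hw' le_rfl
  have hQF : Q ∉ F := fun h => (hF Q h).1 he.2.1
  refine ⟨insert Q F, y, hrun.cons hQ hQF hstep, fun R hR hwR => ?_, hy⟩
  rcases Finset.mem_insert.1 hR with rfl | hR
  · rfl
  · exact absurd hwR (hF R hR).1

-- The tiles `B` at `w` with `cwDist w (cnext n B w) < cwDist w a` are those still to be swept
-- through; in a triangle `{a, w, p}` the strand skips exactly those between `p` and `a`, which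
-- `eq_of_cnext_mem_corner` identifies with the triangle itself.
lemma exists_runsTo_of_isEdge (hn : 3 ≤ n) (w : ZMod n) :
    ∀ k (Q : Finset (ZMod n)) (a : ZMod n), Q ∈ T.tiles → IsEdge n Q a w → cwDist w a ≤ k →
      ∃ F y, RunsTo T F (Q, a) y ∧
        (∀ R ∈ F, w ∈ R → cwDist w (cprev n R w) ≤ cwDist w a) ∧
        (y = w + 1 ↔
          ∀ B ∈ T.tiles, w ∈ B → cwDist w (cnext n B w) < cwDist w a → B.card = 3) := by
  intro k
  induction k with
  | zero =>
    intro Q a _ he hk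
    have := cwDist_pos_iff.2 he.2.2.1.symm
    omega
  | succ k ih =>
    intro Q a hQ he hk
    by_cases h3 : Q.card ≠ 3
    · obtain ⟨F, y, hrun, hF, hy⟩ := T.exists_runsTo_of_card_ne_three hQ he h3
      refine ⟨F, y, hrun, fun R hR hwR => by rw [hF R hR hwR, he.cprev_eq], iff_of_false hy
        fun hall => h3 (hall Q hQ he.2.1 (he.cwDist_cnext_lt (T.three_le Q hQ)))⟩
    rw [not_not] at h3
    have hpa := isEdge_cprev (T.one_lt_card hQ) he.1
    have hwp := he.isEdge_cprev_of_card_eq_three h3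
    set p := cprev n Q a
    have hcorner : ∀ B ∈ T.tiles, w ∈ B → cwDist w p ≤ cwDist w (cnext n B w) →
        cwDist w (cnext n B w) < cwDist w a → B.card = 3 := fun B hB hwB h1 h2 =>
      T.eq_of_cnext_mem_corner hn hQ hwp hpa hB hwB h1 h2 ▸ h3
    have hpa_lt : cwDist w p < cwDist w a := hwp.2.2.2 ▸ he.cwDist_cnext_lt (T.three_le Q hQ)
    rcases scottStep_cases T hQ he.1 with ⟨hend, hstep⟩ | ⟨-, Q', hQ', -, he', hstep⟩
    · have hp : p = w + 1 := by rwa [hwp.cprev_eq] at hend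
      refine ⟨{Q}, p, runsTo_of_scottStep_eq_inr hQ hstep, by simp [he.cprev_eq],
        iff_of_true hp fun B hB hwB h2 => hcorner B hB hwB ?_ h2⟩
      rw [hp, cwDist_add_one (by omega)]
      exact cwDist_pos_iff.2 (isEdge_cnext (T.one_lt_card hB) hwB).2.2.1
    rw [hwp.cprev_eq] at he'
    obtain ⟨F, y, hrun, hF, hy⟩ := ih Q' p hQ' he' (by omega)
    have hQF : Q ∉ F := fun h => absurd (hF Q h he.2.1) (by rw [he.cprev_eq]; omega)
    refine ⟨insert Q F, y, hrun.cons hQ hQF hstep, ?_, hy.trans ?_⟩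
    · simp only [Finset.forall_mem_insert, he.cprev_eq]
      exact ⟨fun _ => le_rfl, fun R hR hwR => (hF R hR hwR).trans hpa_lt.le⟩
    refine forall₂_congr fun B hB => forall_congr' fun hwB =>
      ⟨fun h h2 => ?_, fun h h2 => h (h2.trans hpa_lt)⟩
    rcases lt_or_ge (cwDist w (cnext n B w)) (cwDist w p) with h1 | h1
    · exact h h1
    · exact hcorner B hB hwB h1 h2

lemma cwDist_cnext_lt_cwDist_pred (hn : 3 ≤ n) {B : Finset (ZMod n)} (hB : B ∈ T.tiles)
    {i : ZMod n} (hiB : i + 1 ∈ B) : cwDist (i + 1) (cnext n B (i + 1)) < cwDist (i + 1) i := by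
  have he := isEdge_cnext (T.one_lt_card hB) hiB
  have hs : cnext n B (i + 1) ≠ i := fun h => he.ne_add_one hn (T.three_le B hB) (by rw [h])
  have h1 := cwDist_add_one (by omega : 1 < n) i
  have h2 := cwDist_add_cwDist_swap (cwDist_pos_iff.1 (by omega : 0 < cwDist i (i + 1)))
  have h3 := cwDist_lt (i + 1) (cnext n B (i + 1))
  have h4 := (cwDist_right_inj (a := i + 1)).not.2 hs
  omega

theorem scott_eq_add_two_iff (hn : 3 ≤ n) (i : ZMod n) :
    scott n T i = i + 2 ↔ AllTrianglesAt T (i + 1) := by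
  obtain ⟨hQ, he⟩ := startTile_spec T i
  obtain ⟨F, y, hrun, -, hy⟩ := T.exists_runsTo_of_isEdge hn (i + 1) _ _ i hQ he le_rfl
  rw [scott_eq_of_runsTo hrun, show i + 2 = i + 1 + 1 by ring, hy]
  exact forall₂_congr fun B hB => forall_congr' fun hiB =>
    imp_iff_right (T.cwDist_cnext_lt_cwDist_pred hn hB hiB)

lemma allTrianglesAt_of_mem (hn : 3 ≤ n) (i : ZMod n)
    (hE : ({i, i + 1, i + 2} : Finset (ZMod n)) ∈ T.tiles) : AllTrianglesAt T (i + 1) := by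
  have h1 := cwDist_add_one (by omega : 1 < n) i
  have h2 := cwDist_add_two (by omega : 2 < n) i
  obtain ⟨-, hwp, hpa⟩ := isEdge_triangle (x := i) (y := i + 1) (z := i + 2) (by omega) (by omega)
  intro B hB hiB
  rw [T.eq_of_cnext_mem_corner hn hE hwp hpa hB hiB ?_ (T.cwDist_cnext_lt_cwDist_pred hn hB hiB)]
  · exact card_triangle (by omega) (by omega)
  rw [show i + 2 = i + 1 + 1 by ring, cwDist_add_one (by omega)]
  exact cwDist_pos_iff.2 (isEdge_cnext (T.one_lt_card hB) hiB).2.2.1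

end PolygonTiling

-- `Crosses` depends on the orientation of the chords; `ChordsCross` does not.
def ChordsCross (m : ℕ) (a b c d : ZMod m) : Prop := Crosses m a b c d ∨ Crosses m a b d c

section Chords
variable {n : ℕ} [NeZero n] {a b c d x y : ZMod n}

lemma chordsCross_comm : ChordsCross n a b c d ↔ ChordsCross n c d a b := by
  simp only [ChordsCross, crosses_iff_sbtw a, sbtw_iff, cwDist_self]
  omega

lemma chordsCross_swap : ChordsCross n a b c d ↔ ChordsCross n b a c d := by
  simp only [ChordsCross, crosses_iff_sbtw a, sbtw_iff, cwDist_self]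
  omega

lemma chordsCross_of_sbtw (o : ZMod n)
    (h : sbtw (cwDist o a) (cwDist o c) (cwDist o b) ∧ sbtw (cwDist o b) (cwDist o d) (cwDist o a) ∨
      sbtw (cwDist o a) (cwDist o d) (cwDist o b) ∧ sbtw (cwDist o b) (cwDist o c) (cwDist o a)) :
    ChordsCross n a b c d := by
  rwa [ChordsCross, crosses_iff_sbtw o, crosses_iff_sbtw o]

lemma not_chordsCross_self : ¬ ChordsCross n a b a b := by
  simp only [ChordsCross, crosses_iff_sbtw a, sbtw_iff, cwDist_self]
  omega

lemma chordsCross_iff_of_eq_or (h : x = a ∧ y = b ∨ x = b ∧ y = a) :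
    ChordsCross n x y c d ↔ ChordsCross n a b c d := by
  rcases h with ⟨rfl, rfl⟩ | ⟨rfl, rfl⟩
  exacts [Iff.rfl, chordsCross_swap]

-- The crossing edge is the one leaving the last vertex of `Q` before `b`.
lemma exists_isEdge_crosses {Q : Finset (ZMod n)} (hx : x ∈ Q) (hy : y ∈ Q)
    (hxab : Between n a x b) (hyba : Between n b y a) (hb : b ∉ Q) :
    ∃ e f, IsEdge n Q e f ∧ Crosses n a b e f := by
  obtain ⟨e, he, hmax⟩ := Finset.exists_max_image (Q.filter (Between n a · b)) (cwDist a)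
    ⟨x, Finset.mem_filter.2 ⟨hx, hxab⟩⟩
  rw [Finset.mem_filter] at he
  have hyb := hyba
  rw [between_iff_sbtw a, sbtw_iff, cwDist_self] at hyb
  have heb := he.2
  rw [between_iff_sbtw a, sbtw_iff, cwDist_self] at heb
  have hye : y ≠ e := fun h => by rw [h] at hyb; omega
  have hef := isEdge_cnext (Finset.one_lt_card.2 ⟨e, he.1, y, hy, hye.symm⟩) he.1
  refine ⟨e, _, hef, he.2, ?_⟩
  have hfmax : Between n a (cnext n Q e) b → cwDist a (cnext n Q e) ≤ cwDist a e :=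
    fun h => hmax _ (Finset.mem_filter.2 ⟨hef.2.1, h⟩)
  have hfb := (cwDist_right_inj (a := a)).not.2 fun h : cnext n Q e = b => hb (h ▸ hef.2.1)
  have hfe := (cwDist_right_inj (a := a)).not.2 hef.2.2.1.symm
  have hefy := hef.cwDist_le hy hye
  have := cwDist_lt a y
  rw [cwDist_eq_sub (o := a) (p := e) (q := y) (by omega)] at hefy
  rw [between_iff_sbtw a, sbtw_iff, cwDist_self] at hfmax ⊢
  rcases le_or_gt (cwDist a e) (cwDist a (cnext n Q e)) with h | h
  · rw [cwDist_eq_sub h] at hefy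
    omega
  · rw [cwDist_eq_add_sub h] at hefy
    omega

end Chords

namespace PolygonTiling
variable {n : ℕ} (T : PolygonTiling n) {P Q R R' : Finset (ZMod n)} {a b c d x y : ZMod n}

lemma not_chordsCross [NeZero n] (hQ : Q ∈ T.tiles) (hP : P ∈ T.tiles) (he : IsEdge n Q a b)
    (he' : IsEdge n P c d) : ¬ ChordsCross n a b c d :=
  not_or.2 ⟨T.noncross Q hQ P hP a b c d he he', T.not_crosses_swap hQ hP he he'⟩

structure FlipQuad (a b c d : ZMod n) : Prop where
  between_b : Between n a b c
  between_d : Between n c d a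
  mem_abc : ({a, b, c} : Finset (ZMod n)) ∈ T.tiles
  mem_acd : ({a, c, d} : Finset (ZMod n)) ∈ T.tiles

def flipTiles (a b c d : ZMod n) : Finset (Finset (ZMod n)) :=
  (T.tiles \ {({a, b, c} : Finset (ZMod n)), {a, c, d}}) ∪ {{a, b, d}, {b, c, d}}

variable {T}

lemma mem_flipTiles : R ∈ T.flipTiles a b c d ↔
    (R ∈ T.tiles ∧ R ≠ {a, b, c} ∧ R ≠ {a, c, d}) ∨ R = {a, b, d} ∨ R = {b, c, d} := by
  simp only [flipTiles, Finset.mem_union, Finset.mem_sdiff, Finset.mem_insert,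
    Finset.mem_singleton, not_or]

namespace FlipQuad
variable [NeZero n]

lemma pos (hq : T.FlipQuad a b c d) :
    0 < cwDist a b ∧ cwDist a b < cwDist a c ∧ cwDist a c < cwDist a d ∧
      0 < cwDist b c ∧ cwDist b c < cwDist b d := by
  have h1 := hq.between_b
  have h2 := hq.between_d
  rw [between_iff_sbtw a, sbtw_iff, cwDist_self] at h1 h2
  rw [cwDist_eq_sub (o := a) (p := b) (q := c) (by omega),
    cwDist_eq_sub (o := a) (p := b) (q := d) (by omega)]
  omega

lemma ne (hq : T.FlipQuad a b c d) : a ≠ b ∧ a ≠ c ∧ a ≠ d ∧ b ≠ c ∧ b ≠ d ∧ c ≠ d := by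
  obtain ⟨p1, p2, p3, -, -⟩ := hq.pos
  refine ⟨cwDist_pos_iff.1 p1, cwDist_pos_iff.1 (by omega), cwDist_pos_iff.1 (by omega),
    ?_, ?_, ?_⟩ <;> intro h <;> rw [← cwDist_right_inj (a := a)] at h <;> omega

lemma isEdge_abc_iff (hq : T.FlipQuad a b c d) :
    IsEdge n {a, b, c} x y ↔ x = a ∧ y = b ∨ x = b ∧ y = c ∨ x = c ∧ y = a :=
  isEdge_triangle_iff hq.pos.1 hq.pos.2.1

lemma isEdge_acd_iff (hq : T.FlipQuad a b c d) :
    IsEdge n {a, c, d} x y ↔ x = a ∧ y = c ∨ x = c ∧ y = d ∨ x = d ∧ y = a :=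
  isEdge_triangle_iff (hq.pos.1.trans hq.pos.2.1) hq.pos.2.2.1

lemma isEdge_abd_iff (hq : T.FlipQuad a b c d) :
    IsEdge n {a, b, d} x y ↔ x = a ∧ y = b ∨ x = b ∧ y = d ∨ x = d ∧ y = a :=
  isEdge_triangle_iff hq.pos.1 (hq.pos.2.1.trans hq.pos.2.2.1)

lemma isEdge_bcd_iff (hq : T.FlipQuad a b c d) :
    IsEdge n {b, c, d} x y ↔ x = b ∧ y = c ∨ x = c ∧ y = d ∨ x = d ∧ y = b :=
  isEdge_triangle_iff hq.pos.2.2.2.1 hq.pos.2.2.2.2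

lemma allTrianglesAt_iff (hq : T.FlipQuad a b c d) {T' : PolygonTiling n}
    (h : T'.tiles = T.flipTiles a b c d) (v : ZMod n) :
    AllTrianglesAt T v ↔ AllTrianglesAt T' v := by
  obtain ⟨p1, p2, p3, q1, q2⟩ := hq.pos
  refine ⟨fun hT R hR hvR => ?_, fun hT R hR hvR => ?_⟩
  · rcases mem_flipTiles.1 (h ▸ hR) with ⟨hR, -, -⟩ | rfl | rfl
    exacts [hT R hR hvR, card_triangle p1 (p2.trans p3), card_triangle q1 q2]
  by_cases hR' : R ∈ T'.tiles
  · exact hT R hR' hvR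
  have hR'' : R = {a, b, c} ∨ R = {a, c, d} := by
    by_contra h'
    rw [not_or] at h'
    exact hR' (h ▸ mem_flipTiles.2 (Or.inl ⟨hR, h'⟩))
  rcases hR'' with rfl | rfl
  exacts [card_triangle p1 p2, card_triangle (p1.trans p2) p3]

lemma not_isEdge_bd (hq : T.FlipQuad a b c d) (hP : P ∈ T.tiles) :
    ¬ IsEdge n P b d ∧ ¬ IsEdge n P d b :=
  have hac := hq.isEdge_acd_iff.2 (Or.inl ⟨rfl, rfl⟩)
  ⟨fun he => T.noncross _ hq.mem_acd P hP a c b d hac he ⟨hq.between_b, hq.between_d⟩,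
    fun he => T.not_crosses_swap hq.mem_acd hP hac he ⟨hq.between_b, hq.between_d⟩⟩

-- In every position of `x, y` relative to `a, b, c, d`, a chord `xy` crossing `bd` is `ac` or
-- crosses a side of `abcd` or `ac`.
lemma not_chordsCross_bd (hq : T.FlipQuad a b c d) (hP : P ∈ T.tiles) (he : IsEdge n P x y)
    (hac : ¬ (x = a ∧ y = c)) (hca : ¬ (x = c ∧ y = a)) : ¬ ChordsCross n b d x y := by
  have nab := T.not_chordsCross hq.mem_abc hP (hq.isEdge_abc_iff.2 (Or.inl ⟨rfl, rfl⟩)) he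
  have nbc := T.not_chordsCross hq.mem_abc hP (hq.isEdge_abc_iff.2 (Or.inr (Or.inl ⟨rfl, rfl⟩))) he
  have nac := T.not_chordsCross hq.mem_acd hP (hq.isEdge_acd_iff.2 (Or.inl ⟨rfl, rfl⟩)) he
  have ncd := T.not_chordsCross hq.mem_acd hP (hq.isEdge_acd_iff.2 (Or.inr (Or.inl ⟨rfl, rfl⟩))) he
  have nda := T.not_chordsCross hq.mem_acd hP (hq.isEdge_acd_iff.2 (Or.inr (Or.inr ⟨rfl, rfl⟩))) he
  have hac' : ¬ (cwDist a x = 0 ∧ cwDist a y = cwDist a c) := fun h =>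
    hac ⟨(cwDist_eq_zero_iff.1 h.1).symm, cwDist_right_inj.1 h.2⟩
  have hca' : ¬ (cwDist a x = cwDist a c ∧ cwDist a y = 0) := fun h =>
    hca ⟨cwDist_right_inj.1 h.1, (cwDist_eq_zero_iff.1 h.2).symm⟩
  obtain ⟨p1, p2, p3, -, -⟩ := hq.pos
  rw [ChordsCross, crosses_iff_sbtw a, crosses_iff_sbtw a]
  simp only [sbtw_iff]
  rintro (⟨hX, hY⟩ | ⟨hX, hY⟩) <;>
  · rcases lt_trichotomy (cwDist a x) (cwDist a c) with hxc | hxc | hxc <;>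
    rcases lt_trichotomy (cwDist a y) (cwDist a c) with hyc | hyc | hyc <;>
    rcases Nat.eq_zero_or_pos (cwDist a x) with hx0 | hx0 <;>
    rcases Nat.eq_zero_or_pos (cwDist a y) with hy0 | hy0 <;>
    first
    | omega
    | exact nab (chordsCross_of_sbtw a (by simp only [sbtw_iff, cwDist_self]; omega))
    | exact nbc (chordsCross_of_sbtw a (by simp only [sbtw_iff]; omega))
    | exact nac (chordsCross_of_sbtw a (by simp only [sbtw_iff, cwDist_self]; omega))
    | exact ncd (chordsCross_of_sbtw a (by simp only [sbtw_iff]; omega))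
    | exact nda (chordsCross_of_sbtw a (by simp only [sbtw_iff, cwDist_self]; omega))


lemma card_inter_abd_le (hq : T.FlipQuad a b c d) (hR : R ∈ T.tiles) (hR1 : R ≠ {a, b, c}) :
    (R ∩ {a, b, d}).card ≤ 2 := by
  by_contra! h
  have hsub := subset_of_two_lt_card_inter Finset.card_le_three h
  by_cases hc : c ∈ R
  · have habc : ({a, b, c} : Finset (ZMod n)) ⊆ R := by
      simp only [Finset.insert_subset_iff, Finset.singleton_subset_iff]
      exact ⟨hsub (by simp), hsub (by simp), hc⟩
    have := T.inter_small R hR _ hq.mem_abc hR1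
    rw [Finset.inter_eq_right.2 habc, card_triangle hq.pos.1 hq.pos.2.1] at this
    omega
  obtain ⟨e, f, hef, hcr⟩ :=
    exists_isEdge_crosses (hsub (by simp)) (hsub (by simp)) hq.between_b hq.between_d hc
  exact T.noncross _ hq.mem_acd R hR a c e f (hq.isEdge_acd_iff.2 (Or.inl ⟨rfl, rfl⟩)) hef hcr

lemma card_inter_bcd_le (hq : T.FlipQuad a b c d) (hR : R ∈ T.tiles) (hR2 : R ≠ {a, c, d}) :
    (R ∩ {b, c, d}).card ≤ 2 := by
  by_contra! h
  have hsub := subset_of_two_lt_card_inter Finset.card_le_three h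
  by_cases ha : a ∈ R
  · have hacd : ({a, c, d} : Finset (ZMod n)) ⊆ R := by
      simp only [Finset.insert_subset_iff, Finset.singleton_subset_iff]
      exact ⟨ha, hsub (by simp), hsub (by simp)⟩
    have := T.inter_small R hR _ hq.mem_acd hR2
    rw [Finset.inter_eq_right.2 hacd, card_triangle (hq.pos.1.trans hq.pos.2.1) hq.pos.2.2.1]
      at this
    omega
  obtain ⟨e, f, hef, hcr⟩ :=
    exists_isEdge_crosses (hsub (by simp)) (hsub (by simp)) hq.between_d hq.between_b ha
  exact T.noncross _ hq.mem_abc R hR c a e f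
    (hq.isEdge_abc_iff.2 (Or.inr (Or.inr ⟨rfl, rfl⟩))) hef hcr

lemma isEdge_flipTiles_cases (hn : 3 ≤ n) (hq : T.FlipQuad a b c d)
    (hR : R ∈ T.flipTiles a b c d) (he : IsEdge n R x y) :
    ((∃ P ∈ T.tiles, IsEdge n P x y) ∧ ¬ (x = a ∧ y = c) ∧ ¬ (x = c ∧ y = a)) ∨
      (x = b ∧ y = d) ∨ (x = d ∧ y = b) := by
  obtain ⟨hab, hac, had, hbc, hbd, hcd⟩ := hq.ne
  rcases mem_flipTiles.1 hR with ⟨hRT, hR1, hR2⟩ | rfl | rfl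
  · refine Or.inl ⟨⟨R, hRT, he⟩, fun h => hR2 ?_, fun h => hR1 ?_⟩ <;> rw [h.1, h.2] at he
    · exact T.eq_of_isEdge hn hRT hq.mem_acd he (hq.isEdge_acd_iff.2 (Or.inl ⟨rfl, rfl⟩))
    · exact T.eq_of_isEdge hn hRT hq.mem_abc he
        (hq.isEdge_abc_iff.2 (Or.inr (Or.inr ⟨rfl, rfl⟩)))
  · rcases hq.isEdge_abd_iff.1 he with ⟨rfl, rfl⟩ | ⟨rfl, rfl⟩ | ⟨rfl, rfl⟩
    · exact Or.inl ⟨⟨_, hq.mem_abc, hq.isEdge_abc_iff.2 (Or.inl ⟨rfl, rfl⟩)⟩,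
        fun h => hbc h.2, fun h => hac h.1⟩
    · exact Or.inr (Or.inl ⟨rfl, rfl⟩)
    · exact Or.inl ⟨⟨_, hq.mem_acd, hq.isEdge_acd_iff.2 (Or.inr (Or.inr ⟨rfl, rfl⟩))⟩,
        fun h => had h.1.symm, fun h => hcd h.1.symm⟩
  · rcases hq.isEdge_bcd_iff.1 he with ⟨rfl, rfl⟩ | ⟨rfl, rfl⟩ | ⟨rfl, rfl⟩
    · exact Or.inl ⟨⟨_, hq.mem_abc, hq.isEdge_abc_iff.2 (Or.inr (Or.inl ⟨rfl, rfl⟩))⟩,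
        fun h => hab h.1.symm, fun h => hbc h.1⟩
    · exact Or.inl ⟨⟨_, hq.mem_acd, hq.isEdge_acd_iff.2 (Or.inr (Or.inl ⟨rfl, rfl⟩))⟩,
        fun h => hac h.1.symm, fun h => had h.2.symm⟩
    · exact Or.inr (Or.inr ⟨rfl, rfl⟩)

lemma exists_isEdge_flipTiles (hq : T.FlipQuad a b c d)
    (h : ((∃ P ∈ T.tiles, IsEdge n P x y) ∧ ¬ (x = a ∧ y = c) ∧ ¬ (x = c ∧ y = a)) ∨
      (x = b ∧ y = d) ∨ (x = d ∧ y = b)) :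
    ∃ R ∈ T.flipTiles a b c d, IsEdge n R x y := by
  have habd : ({a, b, d} : Finset (ZMod n)) ∈ T.flipTiles a b c d :=
    mem_flipTiles.2 (Or.inr (Or.inl rfl))
  have hbcd : ({b, c, d} : Finset (ZMod n)) ∈ T.flipTiles a b c d :=
    mem_flipTiles.2 (Or.inr (Or.inr rfl))
  rcases h with ⟨⟨P, hP, he⟩, hac, hca⟩ | ⟨rfl, rfl⟩ | ⟨rfl, rfl⟩
  · by_cases hP1 : P = {a, b, c}
    · subst hP1
      rcases hq.isEdge_abc_iff.1 he with ⟨rfl, rfl⟩ | ⟨rfl, rfl⟩ | ⟨rfl, rfl⟩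
      · exact ⟨_, habd, hq.isEdge_abd_iff.2 (Or.inl ⟨rfl, rfl⟩)⟩
      · exact ⟨_, hbcd, hq.isEdge_bcd_iff.2 (Or.inl ⟨rfl, rfl⟩)⟩
      · exact absurd ⟨rfl, rfl⟩ hca
    by_cases hP2 : P = {a, c, d}
    · subst hP2
      rcases hq.isEdge_acd_iff.1 he with ⟨rfl, rfl⟩ | ⟨rfl, rfl⟩ | ⟨rfl, rfl⟩
      · exact absurd ⟨rfl, rfl⟩ hac
      · exact ⟨_, hbcd, hq.isEdge_bcd_iff.2 (Or.inr (Or.inl ⟨rfl, rfl⟩))⟩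
      · exact ⟨_, habd, hq.isEdge_abd_iff.2 (Or.inr (Or.inr ⟨rfl, rfl⟩))⟩
    exact ⟨P, mem_flipTiles.2 (Or.inl ⟨hP, hP1, hP2⟩), he⟩
  · exact ⟨_, habd, hq.isEdge_abd_iff.2 (Or.inr (Or.inl ⟨rfl, rfl⟩))⟩
  · exact ⟨_, hbcd, hq.isEdge_bcd_iff.2 (Or.inr (Or.inr ⟨rfl, rfl⟩))⟩

lemma not_isEdge_of_isEdge_new (hn : 3 ≤ n) (hq : T.FlipQuad a b c d) (hP : P ∈ T.tiles)
    (hP1 : P ≠ {a, b, c}) (hP2 : P ≠ {a, c, d}) (hPe : IsEdge n P x y)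
    (hR : R = {a, b, d} ∨ R = {b, c, d}) : ¬ IsEdge n R x y := by
  have e1 := hq.isEdge_abc_iff.2 (Or.inl ⟨rfl, rfl⟩)
  have e2 := hq.isEdge_abc_iff.2 (Or.inr (Or.inl ⟨rfl, rfl⟩))
  have f2 := hq.isEdge_acd_iff.2 (Or.inr (Or.inl ⟨rfl, rfl⟩))
  have f3 := hq.isEdge_acd_iff.2 (Or.inr (Or.inr ⟨rfl, rfl⟩))
  rcases hR with rfl | rfl <;> intro he
  · rcases hq.isEdge_abd_iff.1 he with ⟨rfl, rfl⟩ | ⟨rfl, rfl⟩ | ⟨rfl, rfl⟩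
    · exact hP1 (T.eq_of_isEdge hn hP hq.mem_abc hPe e1)
    · exact (hq.not_isEdge_bd hP).1 hPe
    · exact hP2 (T.eq_of_isEdge hn hP hq.mem_acd hPe f3)
  · rcases hq.isEdge_bcd_iff.1 he with ⟨rfl, rfl⟩ | ⟨rfl, rfl⟩ | ⟨rfl, rfl⟩
    · exact hP1 (T.eq_of_isEdge hn hP hq.mem_abc hPe e2)
    · exact hP2 (T.eq_of_isEdge hn hP hq.mem_acd hPe f2)
    · exact (hq.not_isEdge_bd hP).2 hPe

lemma eq_of_isEdge_flipTiles (hn : 3 ≤ n) (hq : T.FlipQuad a b c d)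
    (hR : R ∈ T.flipTiles a b c d) (hR' : R' ∈ T.flipTiles a b c d)
    (he : IsEdge n R x y) (he' : IsEdge n R' x y) : R = R' := by
  obtain ⟨hab, hac, had, hbc, hbd, hcd⟩ := hq.ne
  rcases mem_flipTiles.1 hR with ⟨hRT, hR1, hR2⟩ | hRn <;>
    rcases mem_flipTiles.1 hR' with ⟨hR'T, hR'1, hR'2⟩ | hR'n
  · exact T.eq_of_isEdge hn hRT hR'T he he'
  · exact absurd he' (hq.not_isEdge_of_isEdge_new hn hRT hR1 hR2 he hR'n)
  · exact absurd he (hq.not_isEdge_of_isEdge_new hn hR'T hR'1 hR'2 he' hRn)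
  rcases hRn with rfl | rfl <;> rcases hR'n with rfl | rfl
  · rfl
  · rcases hq.isEdge_abd_iff.1 he with ⟨rfl, rfl⟩ | ⟨rfl, rfl⟩ | ⟨rfl, rfl⟩ <;>
      rcases hq.isEdge_bcd_iff.1 he' with ⟨h1, h2⟩ | ⟨h1, h2⟩ | ⟨h1, h2⟩ <;>
      grind
  · rcases hq.isEdge_bcd_iff.1 he with ⟨rfl, rfl⟩ | ⟨rfl, rfl⟩ | ⟨rfl, rfl⟩ <;>
      rcases hq.isEdge_abd_iff.1 he' with ⟨h1, h2⟩ | ⟨h1, h2⟩ | ⟨h1, h2⟩ <;>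
      grind
  · rfl


lemma three_le_card (hq : T.FlipQuad a b c d) (hR : R ∈ T.flipTiles a b c d) : 3 ≤ R.card := by
  rcases mem_flipTiles.1 hR with ⟨hR, -, -⟩ | rfl | rfl
  · exact T.three_le R hR
  · exact (card_triangle hq.pos.1 (hq.pos.2.1.trans hq.pos.2.2.1)).ge
  · exact (card_triangle hq.pos.2.2.2.1 hq.pos.2.2.2.2).ge

lemma card_inter_le (hq : T.FlipQuad a b c d) (hR : R ∈ T.flipTiles a b c d)
    (hR' : R' ∈ T.flipTiles a b c d) (hne : R ≠ R') : (R ∩ R').card ≤ 2 := by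
  have hnew : (({a, b, d} : Finset (ZMod n)) ∩ {b, c, d}).card ≤ 2 := by
    obtain ⟨hab, hac, had, -⟩ := hq.ne
    have hss : ({a, b, d} : Finset (ZMod n)) ∩ {b, c, d} ⊂ {a, b, d} :=
      (Finset.ssubset_iff_of_subset Finset.inter_subset_left).2
        ⟨a, by simp, fun h => by simp [hab, hac, had] at h⟩
    have := Finset.card_lt_card hss
    rw [card_triangle hq.pos.1 (hq.pos.2.1.trans hq.pos.2.2.1)] at this
    omega
  rcases mem_flipTiles.1 hR with ⟨hRT, hR1, hR2⟩ | rfl | rfl <;>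
    rcases mem_flipTiles.1 hR' with ⟨hR'T, hR'1, hR'2⟩ | rfl | rfl
  · exact T.inter_small R hRT R' hR'T hne
  · exact hq.card_inter_abd_le hRT hR1
  · exact hq.card_inter_bcd_le hRT hR2
  · exact Finset.inter_comm R' _ ▸ hq.card_inter_abd_le hR'T hR'1
  · exact absurd rfl hne
  · exact hnew
  · exact Finset.inter_comm R' _ ▸ hq.card_inter_bcd_le hR'T hR'2
  · exact Finset.inter_comm _ {b, c, d} ▸ hnew
  · exact absurd rfl hne

lemma not_crosses_flipTiles (hn : 3 ≤ n) (hq : T.FlipQuad a b c d)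
    (hR : R ∈ T.flipTiles a b c d) (hR' : R' ∈ T.flipTiles a b c d) {x y u v : ZMod n}
    (he : IsEdge n R x y) (he' : IsEdge n R' u v) : ¬ Crosses n x y u v := by
  intro h
  have h' : ChordsCross n x y u v := Or.inl h
  rcases hq.isEdge_flipTiles_cases hn hR he with ⟨⟨P, hP, hPe⟩, hac, hca⟩ | hbd <;>
    rcases hq.isEdge_flipTiles_cases hn hR' he' with ⟨⟨P', hP', hP'e⟩, hac', hca'⟩ | hbd'
  · exact T.noncross P hP P' hP' x y u v hPe hP'e h
  · exact hq.not_chordsCross_bd hP hPe hac hca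
      ((chordsCross_iff_of_eq_or hbd').1 (chordsCross_comm.1 h'))
  · exact hq.not_chordsCross_bd hP' hP'e hac' hca' ((chordsCross_iff_of_eq_or hbd).1 h')
  · exact not_chordsCross_self ((chordsCross_iff_of_eq_or hbd').1
      (chordsCross_comm.1 ((chordsCross_iff_of_eq_or hbd).1 h')))

def flip (hn : 3 ≤ n) (hq : T.FlipQuad a b c d) : PolygonTiling n where
  tiles := T.flipTiles a b c d
  three_le _ := hq.three_le_card
  boundary_edge i := by
    obtain ⟨P, ⟨hP, he⟩, -⟩ := T.boundary_edge i
    obtain ⟨R, hR, heR⟩ := hq.exists_isEdge_flipTiles (Or.inl ⟨⟨P, hP, he⟩,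
      fun h => hq.between_b.ne_add_one (by omega) (by rw [← h.2, h.1]),
      fun h => hq.between_d.ne_add_one (by omega) (by rw [← h.2, h.1])⟩)
    exact ⟨R, ⟨hR, heR⟩, fun R' hR' => hq.eq_of_isEdge_flipTiles hn hR'.1 hR hR'.2 heR⟩
  diag_shared R hR u v he huv := by
    obtain ⟨R', hR', he'⟩ := hq.exists_isEdge_flipTiles (x := v) (y := u) (by
      rcases hq.isEdge_flipTiles_cases hn hR he with
        ⟨⟨P, hP, hPe⟩, hac, hca⟩ | ⟨rfl, rfl⟩ | ⟨rfl, rfl⟩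
      · obtain ⟨P', ⟨hP', -, hP'e⟩, -⟩ := T.diag_shared P hP u v hPe huv
        exact Or.inl ⟨⟨P', hP', hP'e⟩, fun h => hca ⟨h.2, h.1⟩, fun h => hac ⟨h.2, h.1⟩⟩
      · exact Or.inr (Or.inr ⟨rfl, rfl⟩)
      · exact Or.inr (Or.inl ⟨rfl, rfl⟩))
    refine ⟨R', ⟨hR', fun h => ?_, he'⟩,
      fun R'' hR'' => hq.eq_of_isEdge_flipTiles hn hR''.1 hR' hR''.2.2 he'⟩
    subst h
    exact he.not_isEdge_swap (hq.three_le_card hR) he'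
  inter_small _ hR _ hR' hne := hq.card_inter_le hR hR' hne
  noncross _ hR _ hR' _ _ _ _ he he' := hq.not_crosses_flipTiles hn hR hR' he he'

lemma flipStep (hn : 3 ≤ n) (hq : T.FlipQuad a b c d) : FlipStep n T (hq.flip hn) :=
  ⟨a, b, c, d, hq.between_b, hq.between_d, hq.mem_abc, hq.mem_acd, rfl⟩

end FlipQuad

variable [NeZero n]

-- The tile across `[i + 1, p]` is a triangle `{p, i + 1, u}`, which forms a quadrilateral with
-- `{i, i + 1, p}`.
lemma exists_flipQuad_of_mem (hn : 3 ≤ n) {i p : ZMod n} (hT : AllTrianglesAt T (i + 1))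
    (hQ : ({i, i + 1, p} : Finset (ZMod n)) ∈ T.tiles) (hp : 1 < cwDist i p) (hp2 : p ≠ i + 2) :
    ∃ u, T.FlipQuad (i + 1) u p i ∧ 1 < cwDist i u ∧ cwDist (i + 1) u < cwDist (i + 1) p := by
  have hi1 := cwDist_add_one (by omega : 1 < n) i
  obtain ⟨-, hwp, -⟩ := isEdge_triangle (x := i) (y := i + 1) (z := p) (by omega) (by omega)
  obtain ⟨Q', ⟨hQ', -, he'⟩, -⟩ :=
    T.diag_shared _ hQ _ _ hwp (by rwa [show i + 1 + 1 = i + 2 by ring])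
  obtain ⟨hQ'eq, hw, hu⟩ := eq_triangle_of_card_eq_three (hT Q' hQ' he'.2.1) he'.1
  rw [← he'.2.2.2] at hQ'eq hw hu
  set u := cprev n Q' p
  have hpi := cwDist_eq_add_sub (o := i) (p := p) (q := i) (by simp; omega)
  have hpw := cwDist_eq_add_sub (o := i) (p := p) (q := i + 1) (by omega)
  have hwu := cwDist_eq_sub (o := p) hu.le
  have hwp' := cwDist_eq_add_sub (o := p) (p := i + 1) (q := p) (by simp; omega)
  simp only [cwDist_self] at hpi hwp'
  have hiu := cwDist_eq_sub (o := p) (p := i) (q := u) (by omega)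
  have := cwDist_lt p u
  have := cwDist_lt i p
  refine ⟨u, ⟨(between_iff_sbtw p).2 (by simp only [sbtw_iff, cwDist_self]; omega),
    (between_iff_sbtw p).2 (by simp only [sbtw_iff, cwDist_self]; omega),
    triple_rotate p (i + 1) u ▸ hQ'eq ▸ hQ', triple_rotate i (i + 1) p ▸ hQ⟩, by omega, by omega⟩

lemma exists_flipEquiv_ear (hn : 3 ≤ n) (i : ZMod n) :
    ∀ m (T : PolygonTiling n) (p : ZMod n), AllTrianglesAt T (i + 1) →
      ({i, i + 1, p} : Finset (ZMod n)) ∈ T.tiles → 1 < cwDist i p → cwDist (i + 1) p ≤ m →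
      ∃ T', FlipEquiv n T T' ∧ ({i, i + 1, i + 2} : Finset (ZMod n)) ∈ T'.tiles := by
  intro m
  induction m with
  | zero =>
    intro T p _ _ hp hm
    rw [Nat.le_zero, cwDist_eq_zero_iff] at hm
    rw [← hm, cwDist_add_one (by omega)] at hp
    omega
  | succ m ih =>
    intro T p hT hQ hp hm
    by_cases hp2 : p = i + 2
    · exact ⟨T, Relation.EqvGen.refl T, hp2 ▸ hQ⟩
    obtain ⟨u, hq, hu, hup⟩ := exists_flipQuad_of_mem hn hT hQ hp hp2
    have hmem : ({i, i + 1, u} : Finset (ZMod n)) ∈ (hq.flip hn).tiles :=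
      triple_rotate i (i + 1) u ▸ mem_flipTiles.2 (Or.inr (Or.inl rfl))
    obtain ⟨T', hT', hE⟩ :=
      ih (hq.flip hn) u ((hq.allTrianglesAt_iff rfl _).1 hT) hmem hu (by omega)
    exact ⟨T', .trans _ _ _ (.rel _ _ (hq.flipStep hn)) hT', hE⟩

end PolygonTiling

lemma FlipEquiv.allTrianglesAt_iff {n : ℕ} [NeZero n] {T T' : PolygonTiling n}
    (h : FlipEquiv n T T') (v : ZMod n) : AllTrianglesAt T v ↔ AllTrianglesAt T' v := by
  induction h with
  | rel _ _ h =>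
    obtain ⟨a, b, c, d, h1, h2, ht1, ht2, heq⟩ := h
    exact PolygonTiling.FlipQuad.allTrianglesAt_iff ⟨h1, h2, ht1, ht2⟩ heq v
  | refl => rfl
  | symm _ _ _ ih => exact ih.symm
  | trans _ _ _ _ _ ih1 ih2 => exact ih1.trans ih2

theorem stmt13 (n : ℕ) (hn : 3 ≤ n) (T : PolygonTiling n) (i : ZMod n) :
    scott n T i = i + 2 ↔
      ∃ T' : PolygonTiling n, FlipEquiv n T T' ∧
        ({i, i + 1, i + 2} : Finset (ZMod n)) ∈ T'.tiles := by
  have : NeZero n := ⟨by omega⟩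
  rw [T.scott_eq_add_two_iff hn i]
  constructor
  · intro hT
    obtain ⟨hQ, he⟩ := startTile_spec T i
    obtain ⟨hQeq, -, hp⟩ := eq_triangle_of_card_eq_three (hT _ hQ he.2.1) he.1
    rw [← he.2.2.2] at hQeq hp
    rw [cwDist_add_one (by omega)] at hp
    exact PolygonTiling.exists_flipEquiv_ear hn i _ T _ hT (hQeq ▸ hQ) hp le_rfl
  · rintro ⟨T', hTT', hE⟩
    exact (FlipEquiv.allTrianglesAt_iff hTT' (i + 1)).2 (T'.allTrianglesAt_of_mem hn i hE)
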